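/- arXiv:2312.10999 — 2 statements merged into one kernel-verified Lean document; each statement's English description precedes it below -/
import Mathlib

section
/- Let P, Q be probability distributions on a finite set Ω with P(x) > 0 for all x, and let P̂ : Ω → ℝ_{>0} satisfy (1-γ)P(x) ≤ P̂(x) ≤ (1+γ)P(x) for all x, where γ ∈ (0,1). Then |∑_x P(x)·max(0, 1 - Q(x)/P̂(x)) - d_TV(P,Q)| ≤ γ/(1-γ). -/
open Finset

private lemma max_add_le' (a c : ℝ) (hc : 0 ≤ c) : max 0 (a + c) ≤ max 0 a + c :=
  max_le (by positivity) (by linarith [le_max_right (0:ℝ) a])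

private lemma max_sub_le' (a c : ℝ) (hc : 0 ≤ c) : max 0 a - c ≤ max 0 (a - c) := by
  have h := max_le (α := ℝ) (a := 0) (b := a) (c := max 0 (a - c) + c)
    (by linarith [le_max_left (0:ℝ) (a - c)]) (by linarith [le_max_right (0:ℝ) (a - c)])
  linarith

theorem stmt6 {Ω : Type*} [Fintype Ω] (P Q Phat : Ω → ℝ) (γ : ℝ)
    (hP : ∀ x, 0 < P x) (hQ : ∀ x, 0 ≤ Q x)
    (hPsum : ∑ x, P x = 1) (hQsum : ∑ x, Q x = 1)
    (hPhat : ∀ x, 0 < Phat x)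
    (hγ0 : 0 < γ) (hγ1 : γ < 1)
    (happrox : ∀ x, (1 - γ) * P x ≤ Phat x ∧ Phat x ≤ (1 + γ) * P x) :
    |∑ x, P x * max 0 (1 - Q x / Phat x)
        - ∑ x ∈ univ.filter (fun x => Q x < P x), (P x - Q x)| ≤ γ / (1 - γ) := by
  have h1γ : (0:ℝ) < 1 - γ := by linarith
  have h1γ' : (0:ℝ) < 1 + γ := by linarith
  have key : ∑ x ∈ univ.filter (fun x => Q x < P x), (P x - Q x)
      = ∑ x, max 0 (P x - Q x) := by
    rw [Finset.sum_filter]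
    refine Finset.sum_congr rfl fun x _ => ?_
    split_ifs with h
    · rw [max_eq_right]; linarith
    · rw [max_eq_left]; push_neg at h; linarith
  -- rewrite the term as a max
  have hterm : ∀ x, P x * max 0 (1 - Q x / Phat x)
      = max 0 (P x - P x * Q x / Phat x) := by
    intro x
    rw [mul_max_of_nonneg _ _ (hP x).le, mul_zero, mul_sub, mul_one, mul_div_assoc]
  have upper : ∀ x, P x * max 0 (1 - Q x / Phat x)
      ≤ max 0 (P x - Q x) + γ / (1 + γ) * Q x := by
    intro x
    rw [hterm x]
    have hq := hQ x
    have hph := hPhat x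
    have h2 := (happrox x).2
    have hle : Q x / (1 + γ) ≤ P x * Q x / Phat x := by
      rw [div_le_div_iff₀ h1γ' hph]
      nlinarith
    calc max 0 (P x - P x * Q x / Phat x)
        ≤ max 0 (P x - Q x / (1 + γ)) := max_le_max le_rfl (by linarith)
      _ = max 0 ((P x - Q x) + γ / (1 + γ) * Q x) := by
          congr 1; field_simp; ring
      _ ≤ max 0 (P x - Q x) + γ / (1 + γ) * Q x :=
          max_add_le' _ _ (by positivity)
  have lower : ∀ x, max 0 (P x - Q x) - γ / (1 - γ) * Q x
      ≤ P x * max 0 (1 - Q x / Phat x) := by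
    intro x
    rw [hterm x]
    have hq := hQ x
    have hph := hPhat x
    have h1 := (happrox x).1
    have hle : P x * Q x / Phat x ≤ Q x / (1 - γ) := by
      rw [div_le_div_iff₀ hph h1γ]
      nlinarith
    calc max 0 (P x - Q x) - γ / (1 - γ) * Q x
        ≤ max 0 ((P x - Q x) - γ / (1 - γ) * Q x) :=
          max_sub_le' _ _ (by positivity)
      _ = max 0 (P x - Q x / (1 - γ)) := by congr 1; field_simp; ring
      _ ≤ max 0 (P x - P x * Q x / Phat x) := max_le_max le_rfl (by linarith)
  rw [key, abs_le]
  have hU := Finset.sum_le_sum (fun x (_ : x ∈ univ) => upper x)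
  have hL := Finset.sum_le_sum (fun x (_ : x ∈ univ) => lower x)
  rw [Finset.sum_add_distrib, ← Finset.mul_sum, hQsum, mul_one] at hU
  rw [Finset.sum_sub_distrib, ← Finset.mul_sum, hQsum, mul_one] at hL
  have hcmp : γ / (1 + γ) ≤ γ / (1 - γ) :=
    div_le_div_of_nonneg_left hγ0.le h1γ (by linarith)
  constructor <;> linarith
end

section
/- Let P, Q be distributions on a finite set Ω with P(x) > 0 for all x, and suppose d_TV(P,Q) ≥ η. If P̂ : Ω → ℝ_{>0} satisfies (1-γ)P(x) ≤ P̂(x) ≤ (1+γ)P(x) for all x with γ ∈ (0,1), then ∑_x P(x)·max(0, 1 - Q(x)/P̂(x)) ≥ η - γ/(1-γ). -/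
open Finset

theorem stmt19 {Ω : Type*} [Fintype Ω] (P Q Phat : Ω → ℝ) (γ η : ℝ)
    (hP : ∀ x, 0 < P x) (hQ : ∀ x, 0 ≤ Q x)
    (hPsum : ∑ x, P x = 1) (hQsum : ∑ x, Q x = 1)
    (hPhat : ∀ x, 0 < Phat x)
    (hγ0 : 0 < γ) (hγ1 : γ < 1) (hη0 : 0 < η) (hη1 : η ≤ 1)
    (hfar : η ≤ ∑ x ∈ univ.filter (fun x => Q x < P x), (P x - Q x))
    (happrox : ∀ x, (1 - γ) * P x ≤ Phat x ∧ Phat x ≤ (1 + γ) * P x) :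
    η - γ / (1 - γ) ≤ ∑ x, P x * max 0 (1 - Q x / Phat x) := by
  set S := univ.filter (fun x => Q x < P x) with hS
  have h1γ : (0:ℝ) < 1 - γ := by linarith
  have step1 : ∑ x ∈ S, (P x - Q x / (1 - γ)) ≤ ∑ x, P x * max 0 (1 - Q x / Phat x) := by
    calc ∑ x ∈ S, (P x - Q x / (1 - γ))
        ≤ ∑ x ∈ S, P x * max 0 (1 - Q x / Phat x) := by
          apply Finset.sum_le_sum
          intro x hx
          have hphat := hPhat x
          have hap := (happrox x).1
          have hple : P x / Phat x ≤ 1 / (1 - γ) := by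
            rw [div_le_div_iff₀ hphat h1γ]
            nlinarith [hP x]
          have hq1 : P x * (Q x / Phat x) ≤ Q x / (1 - γ) := by
            have he : P x * (Q x / Phat x) = Q x * (P x / Phat x) := by ring
            rw [he]
            calc Q x * (P x / Phat x) ≤ Q x * (1/(1-γ)) :=
                  mul_le_mul_of_nonneg_left hple (hQ x)
              _ = Q x / (1 - γ) := by ring
          have hmax : 1 - Q x / Phat x ≤ max 0 (1 - Q x / Phat x) := le_max_right _ _
          have hm := mul_le_mul_of_nonneg_left hmax (le_of_lt (hP x))
          nlinarith
      _ ≤ ∑ x, P x * max 0 (1 - Q x / Phat x) := by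
          apply Finset.sum_le_sum_of_subset_of_nonneg (Finset.filter_subset _ _)
          intro x _ _
          exact mul_nonneg (hP x).le (le_max_left _ _)
  have hQS : ∑ x ∈ S, Q x ≤ 1 := by
    rw [← hQsum]
    exact Finset.sum_le_sum_of_subset_of_nonneg (Finset.filter_subset _ _)
      (fun x _ _ => hQ x)
  have key : η - γ/(1-γ) ≤ ∑ x ∈ S, (P x - Q x / (1 - γ)) := by
    have expand : ∑ x ∈ S, (P x - Q x/(1-γ))
        = ∑ x ∈ S, (P x - Q x) - (γ/(1-γ)) * ∑ x ∈ S, Q x := by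
      rw [Finset.mul_sum, ← Finset.sum_sub_distrib]
      apply Finset.sum_congr rfl
      intro x _
      field_simp
      ring
    rw [expand]
    have hγdiv : 0 ≤ γ/(1-γ) := by positivity
    have hle : (γ/(1-γ)) * ∑ x ∈ S, Q x ≤ γ/(1-γ) :=
      calc (γ/(1-γ)) * ∑ x ∈ S, Q x ≤ (γ/(1-γ)) * 1 :=
            mul_le_mul_of_nonneg_left hQS hγdiv
        _ = γ/(1-γ) := mul_one _
    linarith [hfar]
  linarith
end
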